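/- Let a, b, c, d form a 2×2 quantum matrix in an associative unital ℚ(q)-algebra. Then for all h, k ∈ ℕ with h < k and all u ∈ ℤ: d · {a; u choose k, h} = {a; u choose k, h} · d − q^{u−k+h} · {a; u − 2 choose k, h+1} · b c. (Identity (4.6) in the proof of Theorem 4.6.) -/

import Mathlib

/-!
From `a b = q b a` and `a c = q c a` one gets `(b c) a = q⁻² a (b c)`, and with
`d a = a d - (q - q⁻¹) b c` an induction gives
`d aⁿ⁺¹ = aⁿ⁺¹ d - q (1 - q⁻²⁽ⁿ⁺¹⁾) aⁿ b c`.
By linearity, `d P(a) = P(a) d - q Q(a) b c` for every polynomial `P`, where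
`X Q(X) = P(X) - P(q⁻² X)`.

For `P = {X ; u choose k, h}`, substituting `q⁻² X` for `X` lowers `u` by `2`. Each
`(X ; c choose m+1)` loses `q^(c-1-m) X (X ; c-1 choose m) + q^(c-2-m) X (X ; c-2 choose m)`
when `c` drops by `2`, and the q-Pascal rule
`(h+1 choose s)_q = (h choose s-1)_q + q^s (h choose s)_q` regroups these terms into
`P(X) - P(q⁻² X) = q^(u-k+h-1) X {X ; u-2 choose k, h+1}`.
-/

noncomputable section

open Finset

/-- The field `ℚ(q)` of rational functions over `ℚ`. -/
abbrev 𝕂 : Type := RatFunc ℚ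

/-- The indeterminate `q`. -/
def q : 𝕂 := RatFunc.X

/-- `(n)_q = 1 + q + ⋯ + q^(n-1)`. -/
def qNum (n : ℕ) : 𝕂 := ∑ i ∈ range n, q ^ i

/-- `(n)_q! = ∏_{r=1}^n (r)_q`. -/
def qNumFac (n : ℕ) : 𝕂 := ∏ r ∈ range n, qNum (r + 1)

/-- `(n choose s)_q = (n)_q! / ((s)_q! (n-s)_q!)`. -/
def qNumBinom (n s : ℕ) : 𝕂 := qNumFac n / (qNumFac s * qNumFac (n - s))

/-- `[n]_q = (q^n - q^(-n))/(q - q⁻¹)`. -/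
def qInt (n : ℕ) : 𝕂 := (q ^ n - q⁻¹ ^ n) / (q - q⁻¹)

/-- `[n]_q! = ∏_{r=1}^n [r]_q`. -/
def qIntFac (n : ℕ) : 𝕂 := ∏ r ∈ range n, qInt (r + 1)

/-- `[n choose s]_q = [n]_q! / ([s]_q! [n-s]_q!)`. -/
def qIntBinom (n s : ℕ) : 𝕂 := qIntFac n / (qIntFac s * qIntFac (n - s))

variable {A : Type*} [Ring A] [Algebra 𝕂 A]

/-- The `q`-divided power `X^(n) = X^n / [n]_q!`. -/
def qDiv (X : A) (n : ℕ) : A := (qIntFac n)⁻¹ • X ^ n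

/-- The `q`-binomial coefficient `(X ; c choose n) = ∏_{s=1}^n (q^(c+1-s) X - 1)/(q^s - 1)`. -/
def qBin (X : A) (c : ℤ) (n : ℕ) : A :=
  (∏ s ∈ range n, (q ^ (s + 1) - 1))⁻¹ •
    ((List.range n).map (fun i => (q ^ (c - (i : ℤ)) : 𝕂) • X - 1)).prod

/-- `{X ; c choose n , r} = ∑_{s=0}^r q^(binom(s+1,2)) (r choose s)_q (X ; c+s choose n-r)`. -/
def qBrace (X : A) (c : ℤ) (n r : ℕ) : A :=
  ∑ s ∈ range (r + 1),
    (q ^ ((s + 1).choose 2) * qNumBinom r s : 𝕂) • qBin X (c + s) (n - r)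

open Polynomial

lemma q_ne_zero : q ≠ 0 := RatFunc.X_ne_zero

lemma q_pow_sub_one_ne_zero {n : ℕ} (hn : n ≠ 0) : q ^ n - 1 ≠ 0 := by
  have h : q ^ n - 1 = algebraMap ℚ[X] 𝕂 (X ^ n - C 1) := by
    simp [q, RatFunc.algebraMap_X]
  rw [h, ne_eq, map_eq_zero_iff _ (IsFractionRing.injective ℚ[X] 𝕂)]
  exact X_pow_sub_C_ne_zero (Nat.pos_of_ne_zero hn) 1

lemma qNum_ne_zero {n : ℕ} (hn : n ≠ 0) : qNum n ≠ 0 := fun h0 =>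
  q_pow_sub_one_ne_zero hn (by rw [← geom_sum_mul, ← qNum, h0, zero_mul])

lemma qNumFac_ne_zero (n : ℕ) : qNumFac n ≠ 0 :=
  prod_ne_zero_iff.2 fun _ _ => qNum_ne_zero (Nat.succ_ne_zero _)

lemma qNumFac_zero : qNumFac 0 = 1 := prod_range_zero _

lemma qNumFac_succ (n : ℕ) : qNumFac (n + 1) = qNumFac n * qNum (n + 1) := prod_range_succ _ _

lemma qNum_add (m n : ℕ) : qNum (m + n) = qNum m + q ^ m * qNum n := by
  simp only [qNum, sum_range_add, mul_sum, pow_add]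

lemma qNumBinom_zero (n : ℕ) : qNumBinom n 0 = 1 := by
  simp [qNumBinom, qNumFac_zero, qNumFac_ne_zero]

lemma qNumBinom_self (n : ℕ) : qNumBinom n n = 1 := by
  simp [qNumBinom, qNumFac_zero, qNumFac_ne_zero]

lemma qNumBinom_succ_succ {n s : ℕ} (hs : s < n) :
    qNumBinom (n + 1) (s + 1) = qNumBinom n s + q ^ (s + 1) * qNumBinom n (s + 1) := by
  obtain ⟨t, rfl⟩ : ∃ t, n = s + t + 1 := ⟨n - s - 1, by omega⟩
  have hsum : qNum (s + t + 1 + 1) = qNum (s + 1) + q ^ (s + 1) * qNum (t + 1) := by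
    rw [← qNum_add]; ring_nf
  have e₁ : s + t + 1 + 1 - (s + 1) = t + 1 := by omega
  have e₂ : s + t + 1 - s = t + 1 := by omega
  have e₃ : s + t + 1 - (s + 1) = t := by omega
  have := qNumFac_ne_zero s
  have := qNumFac_ne_zero t
  have := qNum_ne_zero (Nat.succ_ne_zero s)
  have := qNum_ne_zero (Nat.succ_ne_zero t)
  simp only [qNumBinom, e₁, e₂, e₃, qNumFac_succ, hsum]
  field_simp

def braceCoeff (r s : ℕ) : 𝕂 := q ^ ((s + 1).choose 2) * qNumBinom r s

lemma qBrace_eq_sum (x : A) (c : ℤ) (n r : ℕ) :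
    qBrace x c n r = ∑ s ∈ range (r + 1), braceCoeff r s • qBin x (c + s) (n - r) := rfl

lemma braceCoeff_zero (r : ℕ) : braceCoeff r 0 = 1 := by
  simp [braceCoeff, qNumBinom_zero]

lemma braceCoeff_succ_self (r : ℕ) :
    braceCoeff (r + 1) (r + 1) = q ^ (r + 1) * braceCoeff r r := by
  rw [braceCoeff, braceCoeff, qNumBinom_self, qNumBinom_self, Nat.choose_succ_succ' (r + 1),
    Nat.choose_one_right, pow_add]
  ring

lemma braceCoeff_succ_succ {r s : ℕ} (hs : s < r) :
    braceCoeff (r + 1) (s + 1) = q ^ (s + 1) * (braceCoeff r s + braceCoeff r (s + 1)) := by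
  rw [braceCoeff, braceCoeff, braceCoeff, qNumBinom_succ_succ hs,
    Nat.choose_succ_succ' (s + 1), Nat.choose_one_right, pow_add]
  ring

lemma sum_braceCoeff_smul_succ {M : Type*} [AddCommGroup M] [Module 𝕂 M] (r : ℕ)
    (T : ℕ → M) :
    ∑ s ∈ range (r + 1), braceCoeff r s • (q ^ (s + 1) • T (s + 1) + q ^ s • T s) =
      ∑ j ∈ range (r + 2), braceCoeff (r + 1) j • T j := by
  have inner : ∀ s ∈ range r, braceCoeff (r + 1) (s + 1) • T (s + 1) =
      braceCoeff r s • q ^ (s + 1) • T (s + 1) +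
        braceCoeff r (s + 1) • q ^ (s + 1) • T (s + 1) := by
    intro s hs
    rw [braceCoeff_succ_succ (mem_range.1 hs), smul_smul, smul_smul, ← add_smul]
    ring_nf
  simp only [smul_add, sum_add_distrib]
  rw [sum_range_succ _ r, sum_range_succ' (fun s => braceCoeff r s • q ^ s • T s),
    sum_range_succ' _ (r + 1), sum_range_succ _ r, sum_congr rfl inner, sum_add_distrib,
    braceCoeff_succ_self, braceCoeff_zero, braceCoeff_zero, mul_smul, smul_comm (q ^ (r + 1))]
  simp only [pow_zero, one_smul]
  abel

section QBin

variable {B : Type*} [Ring B] [Algebra 𝕂 B]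

-- In `qBin` the ascription `(i : ℤ)` coerces the list `List.range n` itself to `List ℤ`
-- (through `flatMap`); this restates the product as one indexed by `ℕ`.
lemma qBin_eq_list_prod (x : A) (c : ℤ) (m : ℕ) :
    qBin x c m = (∏ s ∈ range m, (q ^ (s + 1) - 1))⁻¹ •
      ((List.range m).map fun i : ℕ => (q ^ (c - i) : 𝕂) • x - 1).prod := by
  simp only [qBin, List.pure_def, List.bind_eq_flatMap, ← List.map_eq_flatMap, List.map_map]
  rfl

lemma AlgHom.map_qBin (f : A →ₐ[𝕂] B) (x : A) (c : ℤ) (m : ℕ) :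
    f (qBin x c m) = qBin (f x) c m := by
  simp [qBin_eq_list_prod, map_list_prod, Function.comp_def]

lemma AlgHom.map_qBrace (f : A →ₐ[𝕂] B) (x : A) (c : ℤ) (n r : ℕ) :
    f (qBrace x c n r) = qBrace (f x) c n r := by
  simp [qBrace_eq_sum, f.map_qBin]

lemma qBin_zpow_smul (x : A) (c k : ℤ) (m : ℕ) :
    qBin ((q ^ k : 𝕂) • x) c m = qBin x (c + k) m := by
  simp only [qBin_eq_list_prod, smul_smul, ← zpow_add₀ q_ne_zero, sub_add_eq_add_sub]

lemma qBrace_zpow_smul (x : A) (c k : ℤ) (n r : ℕ) :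
    qBrace ((q ^ k : 𝕂) • x) c n r = qBrace x (c + k) n r := by
  simp only [qBrace_eq_sum, qBin_zpow_smul, add_right_comm]

end QBin

section CommAlgebra

variable {B : Type*} [CommRing B] [Algebra 𝕂 B]

lemma qBin_succ_sub_qBin_pred (x : B) (c : ℤ) (m : ℕ) :
    qBin x c (m + 1) - qBin x (c - 1) (m + 1) =
      (q ^ (c - 1 - m) : 𝕂) • (x * qBin x (c - 1) m) := by
  set α := ∏ s ∈ range m, (q ^ (s + 1) - 1 : 𝕂)
  set P := ((List.range m).map fun i : ℕ => (q ^ (c - 1 - i) : 𝕂) • x - 1).prod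
  have hc :
      qBin x c (m + 1) = (α * (q ^ (m + 1) - 1))⁻¹ • ((q ^ c : 𝕂) • x - 1) * P := by
    rw [qBin_eq_list_prod, prod_range_succ, List.prod_range_succ', smul_mul_assoc]
    simp only [Nat.succ_eq_add_one, Nat.cast_add, Nat.cast_one, Nat.cast_zero, sub_zero,
      sub_add_eq_sub_sub_swap]
    rfl
  have hc' : qBin x (c - 1) (m + 1) =
      (α * (q ^ (m + 1) - 1))⁻¹ • ((q ^ (c - 1 - m) : 𝕂) • x - 1) * P := by
    rw [qBin_eq_list_prod, prod_range_succ, List.prod_range_succ,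
      mul_comm _ ((q ^ (c - 1 - m) : 𝕂) • x - 1), smul_mul_assoc]
  have hscalar :
      (α * (q ^ (m + 1) - 1))⁻¹ * (q ^ c - q ^ (c - 1 - m)) = q ^ (c - 1 - m) * α⁻¹ := by
    have hc : (q ^ c : 𝕂) = q ^ (c - 1 - m) * q ^ (m + 1) := by
      rw [← zpow_natCast, ← zpow_add₀ q_ne_zero]; congr 1; push_cast; ring
    have := q_pow_sub_one_ne_zero (Nat.succ_ne_zero m)
    rw [hc]; field_simp
  rw [hc, hc', qBin_eq_list_prod, smul_mul_assoc, smul_mul_assoc, ← smul_sub, ← sub_mul,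
    sub_sub_sub_cancel_right, ← sub_smul, smul_mul_assoc, smul_smul, hscalar, mul_smul,
    mul_smul_comm]

lemma qBin_succ_sub_qBin_sub_two (x : B) (c : ℤ) (m : ℕ) :
    qBin x c (m + 1) - qBin x (c - 2) (m + 1) =
      (q ^ (c - 1 - m) : 𝕂) • (x * qBin x (c - 1) m) +
        (q ^ (c - 2 - m) : 𝕂) • (x * qBin x (c - 2) m) := by
  have h := qBin_succ_sub_qBin_pred x (c - 1) m
  rw [show c - 1 - 1 = c - 2 by ring] at h
  rw [← qBin_succ_sub_qBin_pred, ← h]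
  abel

lemma qBrace_sub_qBrace_sub_two (x : B) (c : ℤ) {n r : ℕ} (hr : r < n) :
    qBrace x c n r - qBrace x (c - 2) n r =
      (q ^ (c + r - n - 1) : 𝕂) • (x * qBrace x (c - 2) n (r + 1)) := by
  obtain ⟨m, hm⟩ : ∃ m, n - r = m + 1 := ⟨n - r - 1, by omega⟩
  have hm' : n - (r + 1) = m := by omega
  have he : c + r - n - 1 = c - 2 - m := by omega
  set T : ℕ → B := fun j => x * qBin x (c - 2 + j) m
  have hterm : ∀ s : ℕ, qBin x (c + s) (m + 1) - qBin x (c - 2 + s) (m + 1) =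
      (q ^ (c - 2 - m) : 𝕂) • (q ^ (s + 1) • T (s + 1) + q ^ s • T s) := by
    intro s
    rw [show c - 2 + s = c + s - 2 by ring, qBin_succ_sub_qBin_sub_two]
    simp only [T, smul_add, smul_smul, ← zpow_natCast, ← zpow_add₀ q_ne_zero]
    push_cast
    ring_nf
  rw [qBrace_eq_sum, qBrace_eq_sum, qBrace_eq_sum, hm, hm', he, ← sum_sub_distrib, mul_sum]
  simp only [mul_smul_comm]
  rw [← sum_braceCoeff_smul_succ r T, smul_sum]
  refine sum_congr rfl fun s _ => ?_
  rw [← smul_sub, hterm, smul_comm]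

end CommAlgebra

section SkewCommutation

variable {R B : Type*} [CommRing R] [Ring B] [Algebra R B] {a d z : B} {r t : R}

lemma mul_pow_succ_of_skew (hz : z * a = r • (a * z)) (hd : d * a = a * d - (t * (1 - r)) • z)
    (n : ℕ) : d * a ^ (n + 1) = a ^ (n + 1) * d - (t * (1 - r ^ (n + 1))) • (a ^ n * z) := by
  induction n with
  | zero => simpa using hd
  | succ n ih =>
    calc d * a ^ (n + 2) = (d * a ^ (n + 1)) * a := by rw [mul_assoc, ← pow_succ]
      _ = a ^ (n + 1) * (d * a) - (t * (1 - r ^ (n + 1))) • (a ^ n * (z * a)) := by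
        rw [ih, sub_mul, smul_mul_assoc, mul_assoc, mul_assoc]
      _ = a ^ (n + 2) * d - (t * (1 - r ^ (n + 2))) • (a ^ (n + 1) * z) := by
        rw [hd, hz, mul_sub, ← mul_assoc, ← pow_succ, mul_smul_comm, mul_smul_comm,
          ← mul_assoc, ← pow_succ, smul_smul, sub_sub, ← add_smul]
        ring_nf

lemma mul_aeval_of_skew (hz : z * a = r • (a * z)) (hd : d * a = a * d - (t * (1 - r)) • z)
    (P : R[X]) :
    d * aeval a P = aeval a P * d - t • (aeval a (divX (P - P.comp (C r * X))) * z) := by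
  induction P using Polynomial.induction_on' with
  | add P Q hP hQ =>
    rw [add_comp, add_sub_add_comm, divX_add, map_add, map_add, mul_add, hP, hQ]
    simp only [add_mul, smul_add]
    abel
  | monomial n e =>
    rw [← C_mul_X_pow_eq_monomial, mul_comp, C_comp, X_pow_comp, mul_pow, ← C_pow,
      ← mul_assoc, ← map_mul, ← sub_mul, ← map_sub, divX_C_mul_X_pow]
    cases n with
    | zero => simp [Algebra.commutes]
    | succ n =>
      simp only [map_mul, aeval_C, map_pow, aeval_X, Nat.add_sub_cancel, if_false,
        Nat.succ_ne_zero, ← Algebra.smul_def, mul_smul_comm, mul_pow_succ_of_skew hz hd]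
      rw [smul_sub, smul_mul_assoc, smul_mul_assoc, smul_smul, smul_smul]
      ring_nf

lemma mul_aeval_of_skew_of_sub_comp_eq_X_mul (hz : z * a = r • (a * z))
    (hd : d * a = a * d - (t * (1 - r)) • z) {P Q : R[X]}
    (hPQ : P - P.comp (C r * X) = X * Q) :
    d * aeval a P = aeval a P * d - t • (aeval a Q * z) := by
  have hQ : divX (X * Q) = Q := by ext n; simp [coeff_X_mul]
  rw [mul_aeval_of_skew hz hd, hPQ, hQ]

end SkewCommutation

theorem identity_4_6_general {A : Type*} [Ring A] [Algebra 𝕂 A]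
    (a b c d : A)
    (hab : a * b = q • (b * a)) (hac : a * c = q • (c * a))
    (had : a * d - d * a = ((q - q⁻¹ : 𝕂)) • (b * c))
    (h k : ℕ) (hhk : h < k) (u : ℤ) :
    d * qBrace a u k h =
      qBrace a u k h * d -
        (q ^ (u - (k : ℤ) + (h : ℤ)) : 𝕂) • (qBrace a (u - 2) k (h + 1) * (b * c)) := by
  have hbca : (b * c) * a = (q ^ (-2 : ℤ) : 𝕂) • (a * (b * c)) := by
    have h₁ : a * (b * c) = (q ^ 2 : 𝕂) • ((b * c) * a) := by
      rw [← mul_assoc, hab, smul_mul_assoc, mul_assoc, hac, mul_smul_comm, smul_smul,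
        ← mul_assoc, sq]
    rw [h₁, smul_smul, zpow_neg, zpow_ofNat, inv_mul_cancel₀ (pow_ne_zero 2 q_ne_zero),
      one_smul]
  have hda : d * a = a * d - (q * (1 - q ^ (-2 : ℤ))) • (b * c) := by
    have hq : q * (1 - q ^ (-2 : ℤ)) = q - q⁻¹ := by
      rw [zpow_neg, zpow_ofNat, mul_sub, mul_one, sq, mul_inv, ← mul_assoc,
        mul_inv_cancel₀ q_ne_zero, one_mul]
    rw [hq, ← had]
    abel
  have hPQ : qBrace (X : 𝕂[X]) u k h - (qBrace X u k h).comp (C (q ^ (-2 : ℤ)) * X) =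
      X * (C (q ^ (u + h - k - 1)) * qBrace X (u - 2) k (h + 1)) := by
    rw [comp_eq_aeval, AlgHom.map_qBrace, aeval_X, ← smul_eq_C_mul, qBrace_zpow_smul,
      ← sub_eq_add_neg, qBrace_sub_qBrace_sub_two _ _ hhk, smul_eq_C_mul, mul_left_comm]
  have hq : q * q ^ (u + h - k - 1) = q ^ (u - k + h) := by
    rw [← zpow_one_add₀ q_ne_zero]
    ring_nf
  simpa only [AlgHom.map_qBrace, aeval_X, map_mul, aeval_C, ← Algebra.smul_def, smul_mul_assoc,
    smul_smul, hq] using mul_aeval_of_skew_of_sub_comp_eq_X_mul hbca hda hPQ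

/-- **Identity (4.6)** in the proof of Theorem 4.6, for a `2×2` quantum matrix. -/
theorem identity_4_6 {A : Type*} [Ring A] [Algebra 𝕂 A]
    (a b c d : A)
    (hab : a * b = q • (b * a)) (hac : a * c = q • (c * a))
    (hbd : b * d = q • (d * b)) (hcd : c * d = q • (d * c))
    (hbc : b * c = c * b)
    (had : a * d - d * a = ((q - q⁻¹ : 𝕂)) • (b * c))
    (h k : ℕ) (hhk : h < k) (u : ℤ) :
    d * qBrace a u k h =
      qBrace a u k h * d -
        (q ^ (u - (k : ℤ) + (h : ℤ)) : 𝕂) • (qBrace a (u - 2) k (h + 1) * (b * c)) :=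
  identity_4_6_general a b c d hab hac had h k hhk u

end
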